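/- Let n ≥ 2 and c = (4n² - 4n - 3)/(4(2n-1)). Then log(n²) - log 10 ≤ log((1 + (n-1/2)²)/(1 + (2c - (n-1/2))²)) ≤ log(n²). -/

import Mathlib

/-! With `t = n - 1/2` the defining formula reads `2c = t - 1/t`, so `2c - t = -1/t` and the ratio
`(1 + t²) / (1 + 1/t²)` collapses to `t²`; the estimate is then `n²/10 ≤ (n - 1/2)² ≤ n²`. -/

open Real

lemma one_add_sq_div_one_add_sq_eq_sq {t c : ℝ} (ht : t ≠ 0) (hc : 2 * c = t - t⁻¹) :
    (1 + t ^ 2) / (1 + (2 * c - t) ^ 2) = t ^ 2 := by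
  rw [hc, div_eq_iff (by positivity)]
  field_simp
  ring

lemma sq_div_ten_le_sq_sub_half {x : ℝ} (hx : 1 ≤ x) : x ^ 2 / 10 ≤ (x - 1 / 2) ^ 2 := by
  nlinarith

lemma sq_sub_half_le_sq {x : ℝ} (hx : 1 / 4 ≤ x) : (x - 1 / 2) ^ 2 ≤ x ^ 2 := by
  nlinarith

theorem log_distance_estimate (n : ℕ) (hn : 2 ≤ n) (c : ℝ)
    (hc : c = (4 * (n : ℝ) ^ 2 - 4 * n - 3) / (4 * (2 * n - 1))) :
    Real.log ((n : ℝ) ^ 2) - Real.log 10 ≤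
        Real.log ((1 + ((n : ℝ) - 1 / 2) ^ 2) / (1 + (2 * c - ((n : ℝ) - 1 / 2)) ^ 2)) ∧
      Real.log ((1 + ((n : ℝ) - 1 / 2) ^ 2) / (1 + (2 * c - ((n : ℝ) - 1 / 2)) ^ 2)) ≤
        Real.log ((n : ℝ) ^ 2) := by
  have hn' : (2 : ℝ) ≤ n := by exact_mod_cast hn
  have ht : (n : ℝ) - 1 / 2 ≠ 0 := by linarith
  have h2c : 2 * c = ((n : ℝ) - 1 / 2) - ((n : ℝ) - 1 / 2)⁻¹ := by
    rw [hc]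
    field_simp
    ring
  rw [one_add_sq_div_one_add_sq_eq_sq ht h2c, ← log_div (by positivity) (by norm_num)]
  exact ⟨log_le_log (by positivity) (sq_div_ten_le_sq_sub_half (by linarith)),
    log_le_log (by positivity) (sq_sub_half_le_sq (by linarith))⟩
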